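/- Let λ > 0 and 1 ≤ k < l ≤ n with N(k,l) ≤ λ, and let x ∈ K'. Then c_{k,l}(x,y) ≤ λ for all y ∈ L' if and only if c_{k,l}(x,x') ≤ λ. -/

import Mathlib

/-!
Since `N(k,l) ≤ λ` bounds `p̄_{k,l}(x', n)`, and every route from `x'` to `n` passes
either through `l` along the path or through `k`, the vertex `x'` (which is farther than `λ`
from `k`) lies within `λ` of `l`; thus `x' ∈ L'`, giving one direction. Conversely, a
vertex `y ∈ L'` lies after `x`; if `y < x'` then `δ_P(x,y) ≤ λ` by minimality of `x'`, and
if `y ≥ x'` the way around the cycle from `x` to `y` is no longer than the one to `x'`,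
which is at most `λ` because `δ_P(x,x') > λ`.
-/

noncomputable section

variable {X : Type*} [MetricSpace X]

/-- Path distance between vertices `i` and `j` of the path `p₁, …, pₙ`:
the sum of the edge weights `d(p_t, p_{t+1})` for `min i j ≤ t < max i j`. -/
def pathDist (p : ℕ → X) (i j : ℕ) : ℝ :=
  ∑ t ∈ Finset.Ico (min i j) (max i j), dist (p t) (p (t + 1))

/-- Shortest-path distance between vertices `x` and `y` in the unicyclic graph
`P̄[k,l]` obtained by adding the shortcut `(p_k, p_l)` of weight `d(p_k, p_l)`. -/
def pbar (p : ℕ → X) (k l x y : ℕ) : ℝ :=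
  min (pathDist p x y)
    (min (pathDist p x k + dist (p k) (p l) + pathDist p l y)
         (pathDist p x l + dist (p k) (p l) + pathDist p k y))

/-- The length `|C[k,l]|` of the cycle `C[k,l]`. -/
def cycleLen (p : ℕ → X) (k l : ℕ) : ℝ :=
  pathDist p k l + dist (p k) (p l)

/-- The cycle distance `c_{k,l}(x,y)` for `k ≤ x, y ≤ l`. -/
def cycDist (p : ℕ → X) (k l x y : ℕ) : ℝ :=
  min (pathDist p x y) (cycleLen p k l - pathDist p x y)

/-- `S(k,l) = max_{k ≤ x ≤ l} p̄_{k,l}(1,x)`. -/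
def Sfun (p : ℕ → X) (k l : ℕ) : ℝ :=
  sSup ((fun x => pbar p k l 1 x) '' Set.Icc k l)

/-- `E(k,l) = max_{k ≤ x ≤ l} p̄_{k,l}(x,n)`. -/
def Efun (p : ℕ → X) (n k l : ℕ) : ℝ :=
  sSup ((fun x => pbar p k l x n) '' Set.Icc k l)

/-- `U(k,l) = p̄_{k,l}(1,n)`. -/
def Ufun (p : ℕ → X) (n k l : ℕ) : ℝ :=
  pbar p k l 1 n

/-- `O(k,l) = max_{k ≤ x < y ≤ l} c_{k,l}(x,y)`. -/
def Ofun (p : ℕ → X) (k l : ℕ) : ℝ :=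
  sSup {r | ∃ x y : ℕ, k ≤ x ∧ x < y ∧ y ≤ l ∧ r = cycDist p k l x y}

/-- `N(k,l) = max (S(k,l), E(k,l), U(k,l))`. -/
def Nfun (p : ℕ → X) (n k l : ℕ) : ℝ :=
  max (Sfun p k l) (max (Efun p n k l) (Ufun p n k l))

/-- `M(k,l) = max_{1 ≤ x < y ≤ n} p̄_{k,l}(x,y)`, the diameter of `P̄[k,l]`. -/
def Mfun (p : ℕ → X) (n k l : ℕ) : ℝ :=
  sSup {r | ∃ x y : ℕ, 1 ≤ x ∧ x < y ∧ y ≤ n ∧ r = pbar p k l x y}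

lemma pathDist_nonneg (p : ℕ → X) (i j : ℕ) : 0 ≤ pathDist p i j :=
  Finset.sum_nonneg fun _ _ => dist_nonneg

lemma pathDist_comm (p : ℕ → X) (i j : ℕ) : pathDist p i j = pathDist p j i := by
  unfold pathDist; rw [min_comm, max_comm]

lemma pathDist_self (p : ℕ → X) (i : ℕ) : pathDist p i i = 0 := by
  simp [pathDist]

lemma pathDist_add (p : ℕ → X) {i j m : ℕ} (hij : i ≤ j) (hjm : j ≤ m) :
    pathDist p i m = pathDist p i j + pathDist p j m := by
  unfold pathDist
  rw [min_eq_left (hij.trans hjm), max_eq_right (hij.trans hjm), min_eq_left hij,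
    max_eq_right hij, min_eq_left hjm, max_eq_right hjm,
    ← Finset.sum_Ico_consecutive _ hij hjm]

lemma pathDist_mono_right (p : ℕ → X) {i j m : ℕ} (hij : i ≤ j) (hjm : j ≤ m) :
    pathDist p i j ≤ pathDist p i m := by
  rw [pathDist_add p hij hjm]
  linarith [pathDist_nonneg p j m]

lemma pathDist_anti_left (p : ℕ → X) {i j m : ℕ} (hij : i ≤ j) (hjm : j ≤ m) :
    pathDist p j m ≤ pathDist p i m := by
  rw [pathDist_add p hij hjm]
  linarith [pathDist_nonneg p i j]

lemma min_pathDist_le_pbar (p : ℕ → X) {k l x n : ℕ} (hxl : x ≤ l) (hln : l ≤ n) :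
    min (pathDist p k x) (pathDist p x l) ≤ pbar p k l x n := by
  have hd := dist_nonneg (x := p k) (y := p l)
  have hxn := pathDist_mono_right p hxl hln
  have hl_n := pathDist_nonneg p l n
  have hk_n := pathDist_nonneg p k n
  unfold pbar
  rw [pathDist_comm p x k]
  refine le_min (min_le_right _ _ |>.trans hxn) (le_min ?_ ?_)
  · exact (min_le_left _ _).trans (by linarith)
  · exact (min_le_right _ _).trans (by linarith)

lemma pbar_le_Efun (p : ℕ → X) {n k l x : ℕ} (hkx : k ≤ x) (hxl : x ≤ l) :
    pbar p k l x n ≤ Efun p n k l :=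
  le_csSup ((Set.finite_Icc k l).image _).bddAbove ⟨x, ⟨hkx, hxl⟩, rfl⟩

lemma Efun_le_Nfun (p : ℕ → X) (n k l : ℕ) : Efun p n k l ≤ Nfun p n k l :=
  (le_max_left _ _).trans (le_max_right _ _)

lemma pathDist_le_of_Efun_le (p : ℕ → X) {n k l y : ℕ} {lam : ℝ} (hky : k ≤ y) (hyl : y ≤ l)
    (hln : l ≤ n) (hE : Efun p n k l ≤ lam) (hfar : lam < pathDist p k y) :
    pathDist p y l ≤ lam := by
  have hmin := (min_pathDist_le_pbar p hyl hln).trans ((pbar_le_Efun p hky hyl).trans hE)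
  exact (min_le_iff.mp hmin).resolve_left hfar.not_ge

lemma cycDist_le_of_cycDist_le_of_lt_pathDist (p : ℕ → X) {k l x y z : ℕ} {lam : ℝ}
    (hxy : x ≤ y) (hyz : y ≤ z) (hcyc : cycDist p k l x y ≤ lam)
    (hfar : lam < pathDist p x y) : cycDist p k l x z ≤ lam := by
  have hback : cycleLen p k l - pathDist p x y ≤ lam :=
    (min_le_iff.mp hcyc).resolve_left hfar.not_ge
  have hmono := pathDist_mono_right p hxy hyz
  exact (min_le_right _ _).trans (by linarith)

def xPrime (p : ℕ → X) (l : ℕ) (lam : ℝ) (x : ℕ) : ℕ :=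
  sInf {v : ℕ | x < v ∧ v ≤ l ∧ lam < pathDist p x v}

lemma xPrime_spec (p : ℕ → X) {l x : ℕ} {lam : ℝ} (hxl : x ≤ l) (hlam : 0 ≤ lam)
    (hfar : lam < pathDist p x l) :
    x < xPrime p l lam x ∧ xPrime p l lam x ≤ l ∧ lam < pathDist p x (xPrime p l lam x) := by
  have hxl' : x < l := hxl.lt_of_ne <| by
    rintro rfl
    rw [pathDist_self] at hfar
    linarith
  exact Nat.sInf_mem (s := {v | x < v ∧ v ≤ l ∧ lam < pathDist p x v}) ⟨l, hxl', le_rfl, hfar⟩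

lemma pathDist_le_of_lt_xPrime (p : ℕ → X) {l x y : ℕ} {lam : ℝ} (hxy : x < y) (hyl : y ≤ l)
    (hy : y < xPrime p l lam x) : pathDist p x y ≤ lam :=
  not_lt.mp fun hfar =>
    Nat.notMem_of_lt_sInf (s := {v | x < v ∧ v ≤ l ∧ lam < pathDist p x v}) hy ⟨hxy, hyl, hfar⟩

theorem checkO_via_xprime_general {X : Type*} [MetricSpace X]
    (n : ℕ) (p : ℕ → X)
    (k l : ℕ) (hl : l ≤ n)
    (lam : ℝ) (hlam : 0 < lam) (hN : Nfun p n k l ≤ lam)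
    (x : ℕ)
    (hx : x ∈ {z : ℕ | k ≤ z ∧ z ≤ l ∧ pathDist p k z ≤ lam} \
              {z : ℕ | k ≤ z ∧ z ≤ l ∧ pathDist p z l ≤ lam}) :
    (∀ y ∈ {z : ℕ | k ≤ z ∧ z ≤ l ∧ pathDist p z l ≤ lam} \
           {z : ℕ | k ≤ z ∧ z ≤ l ∧ pathDist p k z ≤ lam},
        cycDist p k l x y ≤ lam) ↔
      cycDist p k l x (sInf {v : ℕ | x < v ∧ v ≤ l ∧ lam < pathDist p x v}) ≤ lam := by
  change _ ↔ cycDist p k l x (xPrime p l lam x) ≤ lam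
  obtain ⟨⟨hkx, hxl, hkx_near⟩, hx_notL⟩ := hx
  have hxl_far : lam < pathDist p x l := not_le.mp fun h => hx_notL ⟨hkx, hxl, h⟩
  obtain ⟨hxx', hx'l, hxx'_far⟩ := xPrime_spec p hxl hlam.le hxl_far
  have hkx'_far : lam < pathDist p k (xPrime p l lam x) :=
    hxx'_far.trans_le (pathDist_anti_left p hkx hxx'.le)
  have hkx' : k ≤ xPrime p l lam x := hkx.trans hxx'.le
  constructor
  · intro hall
    exact hall _ ⟨⟨hkx', hx'l, pathDist_le_of_Efun_le p hkx' hx'l hl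
      ((Efun_le_Nfun p n k l).trans hN) hkx'_far⟩, fun h => h.2.2.not_gt hkx'_far⟩
  · rintro hcyc y ⟨⟨hky, hyl, -⟩, hy_notK⟩
    have hky_far : lam < pathDist p k y := not_le.mp fun h => hy_notK ⟨hky, hyl, h⟩
    have hxy : x < y := not_le.mp fun hyx =>
      (hky_far.trans_le (pathDist_mono_right p hky hyx)).not_ge hkx_near
    rcases lt_or_ge y (xPrime p l lam x) with hyx' | hx'y
    · exact (min_le_left _ _).trans (pathDist_le_of_lt_xPrime p hxy hyl hyx')
    · exact cycDist_le_of_cycDist_le_of_lt_pathDist p hxx'.le hx'y hcyc hxx'_far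

/-- Let `λ > 0` and `1 ≤ k < l ≤ n` with `N(k,l) ≤ λ`, and let
`x ∈ K' = K \ L`. Then `c_{k,l}(x,y) ≤ λ` for all `y ∈ L' = L \ K` if and only if
`c_{k,l}(x,x') ≤ λ`, where `x'` is the smallest index with `x < x' ≤ l` and
`δ_P(x,x') > λ`. -/
theorem checkO_via_xprime {X : Type*} [MetricSpace X]
    (n : ℕ) (hn : 2 ≤ n) (p : ℕ → X)
    (k l : ℕ) (hk : 1 ≤ k) (hkl : k < l) (hl : l ≤ n)
    (lam : ℝ) (hlam : 0 < lam) (hN : Nfun p n k l ≤ lam)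
    (x : ℕ)
    (hx : x ∈ {z : ℕ | k ≤ z ∧ z ≤ l ∧ pathDist p k z ≤ lam} \
              {z : ℕ | k ≤ z ∧ z ≤ l ∧ pathDist p z l ≤ lam}) :
    (∀ y ∈ {z : ℕ | k ≤ z ∧ z ≤ l ∧ pathDist p z l ≤ lam} \
           {z : ℕ | k ≤ z ∧ z ≤ l ∧ pathDist p k z ≤ lam},
        cycDist p k l x y ≤ lam) ↔
      cycDist p k l x (sInf {v : ℕ | x < v ∧ v ≤ l ∧ lam < pathDist p x v}) ≤ lam :=
  checkO_via_xprime_general n p k l hl lam hlam hN x hx
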